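/- Let A_1,…,A_N and B_1,…,B_N be skew-Hermitian D×D complex matrices and for δ ∈ ℝ set Z_J(δ) = A_J + δ B_J, V(δ) = exp(Z_1(δ)) · exp(Z_2(δ)) ··· exp(Z_N(δ)) (ordered product), and W_J(δ) = exp(Z_{J+1}(δ)) ··· exp(Z_N(δ)) (the ordered product of the factors to the right of the J-th, with W_N(δ) = 1); all these exponentials are unitary. Then for every unit vector ψ ∈ ℂ^D and every δ ≥ 0: ‖(V(δ) − V(0)) ψ‖₂ ≤ ∫_0^δ ‖ Σ_{J=1}^N W_J(δ′)† · ( ∫_0^1 exp(−s Z_J(δ′)) · B_J · exp(s Z_J(δ′)) ds ) · W_J(δ′) ψ ‖₂ dδ′. -/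

import Mathlib

open scoped Matrix
/-- Componentwise (interval) integral of a matrix-valued function. -/
noncomputable def matIntegral {D : ℕ} (F : ℝ → Matrix (Fin D) (Fin D) ℂ) (a b : ℝ) :
    Matrix (Fin D) (Fin D) ℂ :=
  Matrix.of fun i j => ∫ s in a..b, F s i j

/-- The Euclidean (`ℓ²`) norm of a vector in `ℂ^D`. -/
noncomputable def l2Norm {D : ℕ} (v : Fin D → ℂ) : ℝ :=
  Real.sqrt (∑ i, ‖v i‖ ^ 2)

/-!
Duhamel's formula `exp Y - exp X = exp X ∫₀¹ exp(-sX) (Y - X) exp(sY) ds` shows that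
`δ ↦ exp(Z_J(δ))` has derivative `exp(Z_J) M_J` with `M_J = ∫₀¹ exp(-sZ_J) B_J exp(sZ_J) ds`.
By the product rule, after inserting `W_J W_J† = 1` behind each factor, `V' = V Σ_J W_J† M_J W_J`.
As `V` is unitary, the fundamental theorem of calculus and `‖∫ f‖ ≤ ∫ ‖f‖` give the bound.
-/

open NormedSpace

section BanachAlgebra

variable {𝔸 : Type*} [NormedRing 𝔸] [NormedAlgebra ℝ 𝔸]

noncomputable def duhamelIntegral (X B Y : 𝔸) : 𝔸 :=
  ∫ s in (0:ℝ)..1, exp ((-s) • X) * B * exp (s • Y)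

theorem duhamelIntegral_smul (X B Y : 𝔸) (c : ℝ) :
    duhamelIntegral X (c • B) Y = c • duhamelIntegral X B Y := by
  simp only [duhamelIntegral, ← intervalIntegral.integral_smul, mul_smul_comm, smul_mul_assoc]

variable [CompleteSpace 𝔸]

noncomputable local instance : NormedAlgebra ℚ 𝔸 := NormedAlgebra.restrictScalars ℚ ℝ 𝔸

theorem continuous_duhamelIntegral {X Y : ℝ → 𝔸} (hX : Continuous X) (hY : Continuous Y)
    (B : 𝔸) : Continuous fun t => duhamelIntegral (X t) B (Y t) := by
  exact intervalIntegral.continuous_parametric_intervalIntegral_of_continuous' (by fun_prop) 0 1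

theorem exp_sub_exp_eq_mul_duhamelIntegral (X Y : 𝔸) :
    exp Y - exp X = exp X * duhamelIntegral X (Y - X) Y := by
  have hderiv : ∀ s : ℝ, HasDerivAt (fun s : ℝ => exp (s • -X) * exp (s • Y))
      (exp ((-s) • X) * (Y - X) * exp (s • Y)) s := fun s => by
    convert (hasDerivAt_exp_smul_const (-X) s).fun_mul (hasDerivAt_exp_smul_const' Y s) using 1
    simp only [neg_smul, smul_neg]
    noncomm_ring
  have hftc : duhamelIntegral X (Y - X) Y = exp (-X) * exp Y - 1 := by
    rw [duhamelIntegral, intervalIntegral.integral_eq_sub_of_hasDerivAt (fun s _ => hderiv s)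
      (by apply Continuous.intervalIntegrable; fun_prop)]
    simp
  rw [hftc, mul_sub, ← mul_assoc, ← exp_add_of_commute (Commute.refl X).neg_right,
    add_neg_cancel, exp_zero, one_mul, mul_one]

theorem hasDerivAt_exp_add_smul (A B : 𝔸) (t₀ : ℝ) :
    HasDerivAt (fun t : ℝ => exp (A + t • B))
      (exp (A + t₀ • B) * duhamelIntegral (A + t₀ • B) B (A + t₀ • B)) t₀ := by
  set Z : ℝ → 𝔸 := fun t => A + t • B
  have hslope : ∀ t ≠ t₀, slope (fun t => exp (Z t)) t₀ t
      = exp (Z t₀) * duhamelIntegral (Z t₀) B (Z t) := fun t ht => by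
    have hZ : Z t - Z t₀ = (t - t₀) • B := by simp only [Z, add_sub_add_left_eq_sub, ← sub_smul]
    rw [slope_def_module, exp_sub_exp_eq_mul_duhamelIntegral, hZ, duhamelIntegral_smul,
      mul_smul_comm, smul_smul, inv_mul_cancel₀ (sub_ne_zero.2 ht), one_smul]
  have hcont : Continuous fun t => exp (Z t₀) * duhamelIntegral (Z t₀) B (Z t) :=
    continuous_const.mul (continuous_duhamelIntegral continuous_const (by fun_prop) B)
  rw [hasDerivAt_iff_tendsto_slope]
  exact ((hcont.tendsto t₀).mono_left nhdsWithin_le_nhds).congr'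
    (eventually_nhdsWithin_of_forall fun t ht => (hslope t ht).symm)

end BanachAlgebra

section ProductRule

variable {𝔸 : Type*} [NormedRing 𝔸] [NormedAlgebra ℝ 𝔸]

theorem hasDerivAt_list_ofFn_prod {n : ℕ} {f : Fin n → ℝ → 𝔸} {f' : Fin n → 𝔸} {t : ℝ}
    (hf : ∀ J, HasDerivAt (f J) (f' J) t) :
    HasDerivAt (fun t => (List.ofFn fun J => f J t).prod)
      (∑ J : Fin n, ((List.ofFn fun J => f J t).take J).prod * f' J *
        ((List.ofFn fun J => f J t).drop (J + 1)).prod) t := by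
  induction n with
  | zero => simpa using hasDerivAt_const t (1 : 𝔸)
  | succ n ih =>
    have htail := ih (f := fun J => f J.succ) (f' := fun J => f' J.succ) fun J => hf J.succ
    convert (hf 0).fun_mul htail using 1
    · simp only [List.ofFn_succ, List.prod_cons]
    · simp only [Fin.sum_univ_succ, List.ofFn_succ, Fin.val_zero, Fin.val_succ, List.take_zero,
        List.prod_nil, List.drop_succ_cons, List.take_succ_cons, List.prod_cons, List.drop_zero,
        one_mul, Finset.mul_sum, mul_assoc]

variable [StarRing 𝔸]

theorem hasDerivAt_list_ofFn_prod_of_mem_unitary {n : ℕ} {f : Fin n → ℝ → 𝔸} {m : Fin n → 𝔸}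
    {t : ℝ} (hu : ∀ J, f J t ∈ unitary 𝔸) (hf : ∀ J, HasDerivAt (f J) (f J t * m J) t) :
    HasDerivAt (fun t => (List.ofFn fun J => f J t).prod)
      ((List.ofFn fun J => f J t).prod * ∑ J : Fin n,
        star ((List.ofFn fun J => f J t).drop (J + 1)).prod * m J *
          ((List.ofFn fun J => f J t).drop (J + 1)).prod) t := by
  refine (hasDerivAt_list_ofFn_prod hf).congr_deriv ?_
  rw [Finset.mul_sum]
  refine Finset.sum_congr rfl fun J _ => ?_
  set l := List.ofFn fun J => f J t
  have hW : (l.drop (J + 1)).prod * star (l.drop (J + 1)).prod = 1 :=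
    Unitary.mul_star_self_of_mem <| (unitary 𝔸).list_prod_mem fun x hx =>
      List.forall_mem_ofFn_iff.2 hu x (List.mem_of_mem_drop hx)
  have hsplit : l.prod = (l.take J).prod * f J t * (l.drop (J + 1)).prod := by
    rw [← List.prod_take_mul_prod_drop l (J + 1), List.prod_take_succ l J (by simp [l])]
    simp [l]
  calc (l.take J).prod * (f J t * m J) * (l.drop (J + 1)).prod
      = (l.take J).prod * f J t * ((l.drop (J + 1)).prod * star (l.drop (J + 1)).prod) * m J *
          (l.drop (J + 1)).prod := by rw [hW]; noncomm_ring
    _ = _ := by rw [hsplit]; noncomm_ring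

end ProductRule

theorem continuous_list_ofFn_prod_drop {X M : Type*} [TopologicalSpace X] [TopologicalSpace M]
    [Monoid M] [ContinuousMul M] {n : ℕ} {f : Fin n → X → M} (hf : ∀ J, Continuous (f J))
    (k : ℕ) : Continuous fun x => ((List.ofFn fun J => f J x).drop k).prod := by
  simp only [List.ofFn_eq_map, ← List.map_drop]
  exact continuous_list_prod _ fun J _ => hf J

theorem norm_sub_le_integral_norm_of_hasDerivAt {E : Type*} [NormedAddCommGroup E]
    [NormedSpace ℝ E] [CompleteSpace E] {f f' : ℝ → E} (hf : ∀ t, HasDerivAt f (f' t) t)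
    (hf' : Continuous f') {δ : ℝ} (hδ : 0 ≤ δ) :
    ‖f δ - f 0‖ ≤ ∫ t in (0:ℝ)..δ, ‖f' t‖ := by
  rw [← intervalIntegral.integral_eq_sub_of_hasDerivAt (fun t _ => hf t)
    (hf'.intervalIntegrable 0 δ)]
  exact intervalIntegral.norm_integral_le_integral_norm hδ

theorem Matrix.exp_mem_unitary_of_conjTranspose_eq_neg {m 𝕜 : Type*} [Fintype m] [DecidableEq m]
    [RCLike 𝕜] {Z : Matrix m m 𝕜} (hZ : Zᴴ = -Z) : exp Z ∈ unitary (Matrix m m 𝕜) := by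
  rw [Unitary.mem_iff, Matrix.star_eq_conjTranspose, ← Matrix.exp_conjTranspose, hZ,
    ← Matrix.exp_add_of_commute _ _ (Commute.refl Z).neg_left,
    ← Matrix.exp_add_of_commute _ _ (Commute.refl Z).neg_right, neg_add_cancel, add_neg_cancel,
    exp_zero, and_self]

section EuclideanNorm

variable {D : ℕ}

theorem l2Norm_eq_norm_toLp (v : Fin D → ℂ) : l2Norm v = ‖WithLp.toLp 2 v‖ := by
  simp [l2Norm, EuclideanSpace.norm_eq]

theorem l2Norm_mulVec_of_mem_unitary {U : Matrix (Fin D) (Fin D) ℂ}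
    (hU : U ∈ unitary (Matrix (Fin D) (Fin D) ℂ)) (v : Fin D → ℂ) :
    l2Norm (U *ᵥ v) = l2Norm v := by
  rw [l2Norm_eq_norm_toLp, l2Norm_eq_norm_toLp, ← Matrix.toEuclideanCLM_toLp]
  exact ContinuousLinearMap.norm_map_of_mem_unitary (Unitary.map_mem _ hU) _

end EuclideanNorm

section MatrixNorm

-- Any norm would do here: it only serves to make matrices a real Banach algebra.
attribute [local instance] Matrix.linftyOpSemiNormedRing Matrix.linftyOpNormedRing
  Matrix.linftyOpNormedAlgebra

theorem matIntegral_eq_intervalIntegral {D : ℕ} {F : ℝ → Matrix (Fin D) (Fin D) ℂ} {a b : ℝ}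
    (hF : Continuous F) :
    matIntegral F a b = ∫ s in a..b, F s := by
  ext i j
  exact (Matrix.entryLinearMap ℝ ℂ i j).toContinuousLinearMap.intervalIntegral_comp_comm
    (μ := MeasureTheory.volume) (hF.intervalIntegrable a b)

theorem matIntegral_eq_duhamelIntegral {D : ℕ} (X B Y : Matrix (Fin D) (Fin D) ℂ) :
    matIntegral (fun s => exp ((-s) • X) * B * exp (s • Y)) 0 1 = duhamelIntegral X B Y :=
  matIntegral_eq_intervalIntegral (by fun_prop)

theorem l2Norm_sub_mulVec_le_integral {D : ℕ} {V S : ℝ → Matrix (Fin D) (Fin D) ℂ}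
    (hV : ∀ t, HasDerivAt V (V t * S t) t) (hVu : ∀ t, V t ∈ unitary (Matrix (Fin D) (Fin D) ℂ))
    (hS : Continuous S) (ψ : Fin D → ℂ) {δ : ℝ} (hδ : 0 ≤ δ) :
    l2Norm ((V δ - V 0) *ᵥ ψ) ≤ ∫ t in (0:ℝ)..δ, l2Norm (S t *ᵥ ψ) := by
  let Φ : Matrix (Fin D) (Fin D) ℂ →L[ℝ] EuclideanSpace ℂ (Fin D) :=
    LinearMap.toContinuousLinearMap
      { toFun := fun M => WithLp.toLp 2 (M *ᵥ ψ)
        map_add' := fun M M' => by simp [Matrix.add_mulVec]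
        map_smul' := fun c M => by simp [Matrix.smul_mulVec] }
  have hΦ : ∀ M, l2Norm (M *ᵥ ψ) = ‖Φ M‖ := fun M => l2Norm_eq_norm_toLp _
  have hVc : Continuous V := continuous_iff_continuousAt.2 fun t => (hV t).continuousAt
  calc l2Norm ((V δ - V 0) *ᵥ ψ) = ‖Φ (V δ) - Φ (V 0)‖ := by rw [hΦ, map_sub]
    _ ≤ ∫ t in (0:ℝ)..δ, ‖Φ (V t * S t)‖ := norm_sub_le_integral_norm_of_hasDerivAt
        (fun t => Φ.hasFDerivAt.comp_hasDerivAt t (hV t)) (Φ.continuous.comp (hVc.mul hS)) hδ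
    _ = ∫ t in (0:ℝ)..δ, l2Norm (S t *ᵥ ψ) := by
      simp only [← hΦ, ← Matrix.mulVec_mulVec, l2Norm_mulVec_of_mem_unitary (hVu _)]

/-- **Perturbation bound for products of unitary exponentials.**
Let `A_J`, `B_J` be skew-Hermitian, `Z_J(δ) = A_J + δ B_J`,
`V(δ) = exp(Z_1(δ)) ⋯ exp(Z_N(δ))` and `W_J(δ) = exp(Z_{J+1}(δ)) ⋯ exp(Z_N(δ))`
(all unitary).  Then for every unit vector `ψ` and every `δ ≥ 0`,
`‖(V(δ) − V(0))ψ‖₂ ≤ ∫_0^δ ‖Σ_J W_J(δ')† (∫_0^1 exp(−s Z_J(δ')) B_J exp(s Z_J(δ')) ds) W_J(δ') ψ‖₂ dδ'`. -/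
theorem norm_prod_exp_perturbation {D N : ℕ} (A B : Fin N → Matrix (Fin D) (Fin D) ℂ)
    (hA : ∀ J, (A J)ᴴ = -(A J)) (hB : ∀ J, (B J)ᴴ = -(B J)) :
    letI Z : Fin N → ℝ → Matrix (Fin D) (Fin D) ℂ := fun J δ => A J + δ • B J
    letI V : ℝ → Matrix (Fin D) (Fin D) ℂ :=
      fun δ => (List.ofFn fun J => NormedSpace.exp (Z J δ)).prod
    letI W : Fin N → ℝ → Matrix (Fin D) (Fin D) ℂ :=
      fun J δ => ((List.ofFn fun J' => NormedSpace.exp (Z J' δ)).drop ((J : ℕ) + 1)).prod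
    ∀ (ψ : Fin D → ℂ), l2Norm ψ = 1 → ∀ (δ : ℝ), 0 ≤ δ →
      l2Norm ((V δ - V 0).mulVec ψ) ≤
        ∫ δ' in (0:ℝ)..δ,
          l2Norm
            ((∑ J : Fin N,
                (W J δ')ᴴ *
                  matIntegral
                    (fun s =>
                      NormedSpace.exp ((-s) • Z J δ') * B J *
                        NormedSpace.exp (s • Z J δ'))
                    0 1 *
                  W J δ').mulVec ψ) := by
  intro ψ _ δ hδ
  have hskew : ∀ J (t : ℝ), (A J + t • B J)ᴴ = -(A J + t • B J) := fun J t => by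
    rw [Matrix.conjTranspose_add, Matrix.conjTranspose_smul, hA, hB, star_trivial, neg_add,
      smul_neg]
  have hU : ∀ J t, exp (A J + t • B J) ∈ unitary (Matrix (Fin D) (Fin D) ℂ) := fun J t =>
    Matrix.exp_mem_unitary_of_conjTranspose_eq_neg (hskew J t)
  simp only [matIntegral_eq_duhamelIntegral]
  refine l2Norm_sub_mulVec_le_integral
    (V := fun t => (List.ofFn fun J => exp (A J + t • B J)).prod)
    (fun t => ?_) (fun t => ?_) ?_ ψ hδ
  · exact hasDerivAt_list_ofFn_prod_of_mem_unitary (fun J => hU J t)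
      fun J => hasDerivAt_exp_add_smul (A J) (B J) t
  · exact (unitary _).list_prod_mem <| List.forall_mem_ofFn_iff.2 fun J => hU J t
  · have hZ : ∀ J, Continuous fun t : ℝ => A J + t • B J := fun J => by fun_prop
    have hW : ∀ J : Fin N, Continuous fun t : ℝ =>
        ((List.ofFn fun J' => exp (A J' + t • B J')).drop (J + 1)).prod := fun J =>
      continuous_list_ofFn_prod_drop (fun J' => exp_continuous.comp (hZ J')) _
    exact continuous_finsetSum _ fun J _ => ((hW J).matrix_conjTranspose.mul
      (continuous_duhamelIntegral (hZ J) (hZ J) (B J))).mul (hW J)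

end MatrixNorm
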